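/- For every positive integer k and every integer m ≥ k, Duplicator wins the k-round Ehrenfeucht game on the trees T_1^{(1,k,m)} and T_2^{(1,k,m)} in which Spoiler makes all k of his moves on T_1^{(1,k,m)} and Duplicator responds on T_2^{(1,k,m)}; that is, Duplicator can ensure the winning conditions (Main 1) and (Main 2) hold for all selected pairs together with the pair of roots. -/

import Mathlib

/-! ## Rooted trees -/

/-- A rooted tree structure: a vertex type, a root, and a parent map
(`parent v = none` is intended to hold exactly when `v` is the root). -/
structure RTree where
  V : Type
  root : V
  parent : V → Option V

namespace RTree

/-- Iterate the parent map `n` times. -/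
def parentIter (T : RTree) : ℕ → T.V → Option T.V
  | 0, v => some v
  | n + 1, v => (T.parent v).bind (T.parentIter n)

/-- `u` is a descendant of `v` (possibly `u = v`). -/
def IsDesc (T : RTree) (v u : T.V) : Prop :=
  ∃ n, T.parentIter n u = some v

/-- The structure is a genuine rooted, locally finite tree:
exactly the root has no parent, every vertex reaches the root by iterating
the parent map (connectivity and acyclicity), and every vertex has finitely
many children (local finiteness). -/
def IsTree (T : RTree) : Prop :=
  (∀ v, T.parent v = none ↔ v = T.root) ∧
  (∀ v, ∃ n, T.parentIter n v = some T.root) ∧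
  (∀ v, {u | T.parent u = some v}.Finite)

open Classical in
/-- The subtree `T(v)` consisting of `v` and all its descendants, rooted at `v`. -/
noncomputable def subtree (T : RTree) (v : T.V) : RTree where
  V := {u : T.V // T.IsDesc v u}
  root := ⟨v, 0, rfl⟩
  parent u :=
    if u.1 = v then none
    else (T.parent u.1).bind fun w =>
      if h : T.IsDesc v w then some ⟨w, h⟩ else none

end RTree

/-- An isomorphism of rooted trees: a bijection of vertices mapping root to
root and commuting with the parent maps. -/
structure TreeIso (S T : RTree) where
  toEquiv : S.V ≃ T.V
  map_root : toEquiv S.root = T.root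
  map_parent : ∀ v, (S.parent v).map toEquiv = T.parent (toEquiv v)

/-! ## First-order logic of rooted trees -/

/-- Terms: variables (de Bruijn indices) and the constant `R` for the root. -/
inductive FOTerm where
  | var : ℕ → FOTerm
  | root : FOTerm
deriving DecidableEq

/-- First-order formulas in the language of rooted trees: equality `x = y`,
the parent relation `parentOf t t'` (meaning `π(t') = t`, i.e. `t` is the
parent of `t'`), Boolean connectives, and quantifiers (de Bruijn style). -/
inductive FOFormula where
  | eq : FOTerm → FOTerm → FOFormula
  | parentOf : FOTerm → FOTerm → FOFormula
  | not : FOFormula → FOFormula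
  | and : FOFormula → FOFormula → FOFormula
  | or : FOFormula → FOFormula → FOFormula
  | imp : FOFormula → FOFormula → FOFormula
  | all : FOFormula → FOFormula
  | ex : FOFormula → FOFormula
deriving DecidableEq

namespace FOTerm

def eval (T : RTree) (env : ℕ → T.V) : FOTerm → T.V
  | var n => env n
  | root => T.root

def freeBound : FOTerm → ℕ
  | var n => n + 1
  | root => 0

end FOTerm

/-- Kinds of quantifiers, used to count alternations. -/
inductive QKind where
  | ex | all
deriving DecidableEq

/-- The dual of a quantifier kind. -/
def QKind.dual : QKind → QKind
  | .ex => .all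
  | .all => .ex

namespace FOFormula

/-- Satisfaction of a formula in a rooted tree under an environment. -/
def Sat (T : RTree) : FOFormula → (ℕ → T.V) → Prop
  | eq t₁ t₂, env => t₁.eval T env = t₂.eval T env
  | parentOf t₁ t₂, env => T.parent (t₂.eval T env) = some (t₁.eval T env)
  | not φ, env => ¬ φ.Sat T env
  | and φ ψ, env => φ.Sat T env ∧ ψ.Sat T env
  | or φ ψ, env => φ.Sat T env ∨ ψ.Sat T env
  | imp φ ψ, env => φ.Sat T env → ψ.Sat T env
  | all φ, env => ∀ w : T.V, φ.Sat T (fun n => match n with | 0 => w | Nat.succ k => env k)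
  | ex φ, env => ∃ w : T.V, φ.Sat T (fun n => match n with | 0 => w | Nat.succ k => env k)

/-- Quantifier depth: the maximum number of nested quantifiers. -/
def qd : FOFormula → ℕ
  | eq _ _ => 0
  | parentOf _ _ => 0
  | not φ => φ.qd
  | and φ ψ => max φ.qd ψ.qd
  | or φ ψ => max φ.qd ψ.qd
  | imp φ ψ => max φ.qd ψ.qd
  | all φ => φ.qd + 1
  | ex φ => φ.qd + 1

/-- Auxiliary alternation count: `aqdAux φ pol q` is the maximum number of
alternations between (effectively) existential and universal quantifiers along
a nested quantifier sequence of `φ`, given the current polarity `pol`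
(`true` = positive; negations and antecedents of implications flip it, so that
e.g. a `∀` under a negation counts as an `∃`) and the effective kind `q` of
the innermost enclosing quantifier (if any). -/
def aqdAux : FOFormula → Bool → Option QKind → ℕ
  | eq _ _, _, _ => 0
  | parentOf _ _, _, _ => 0
  | not φ, pol, q => φ.aqdAux (!pol) q
  | and φ ψ, pol, q => max (φ.aqdAux pol q) (ψ.aqdAux pol q)
  | or φ ψ, pol, q => max (φ.aqdAux pol q) (ψ.aqdAux pol q)
  | imp φ ψ, pol, q => max (φ.aqdAux (!pol) q) (ψ.aqdAux pol q)
  | all φ, pol, q =>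
      (if q = some (if pol then QKind.ex else QKind.all) then 1 else 0) +
        φ.aqdAux pol (some (if pol then QKind.all else QKind.ex))
  | ex φ, pol, q =>
      (if q = some (if pol then QKind.all else QKind.ex) then 1 else 0) +
        φ.aqdAux pol (some (if pol then QKind.ex else QKind.all))

/-- The number of alternations of quantifiers of a formula: the maximum number
of switches between (effectively) existential and universal quantifiers in a
nested quantifier sequence.  Purely existential or purely universal formulas
have `aqd = 0`. -/
def aqd (φ : FOFormula) : ℕ := φ.aqdAux true none

/-- A bound on the free variables of a formula: all free de Bruijn indices
are `< freeBound`. -/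
def freeBound : FOFormula → ℕ
  | eq t₁ t₂ => max t₁.freeBound t₂.freeBound
  | parentOf t₁ t₂ => max t₁.freeBound t₂.freeBound
  | not φ => φ.freeBound
  | and φ ψ => max φ.freeBound ψ.freeBound
  | or φ ψ => max φ.freeBound ψ.freeBound
  | imp φ ψ => max φ.freeBound ψ.freeBound
  | all φ => φ.freeBound - 1
  | ex φ => φ.freeBound - 1

/-- A sentence is a formula with no free variables. -/
def IsSentence (φ : FOFormula) : Prop := φ.freeBound = 0

end FOFormula

/-- A (closed) formula holds in a rooted tree. -/
def Models (T : RTree) (φ : FOFormula) : Prop :=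
  φ.Sat T (fun _ => T.root)

/-- The formula `P_i(x)`, with free variable `x` being de Bruijn index `0`:
`P_0(x) = ∀ y ¬(π(y) = x)` and `P_{i+1}(x) = ∀ y (π(y) = x → ¬ P_i(y))`. -/
def Pform : ℕ → FOFormula
  | 0 => .all (.not (.parentOf (.var 1) (.var 0)))
  | i + 1 => .all (.imp (.parentOf (.var 1) (.var 0)) (.not (Pform i)))

/-- The sentence `KEIN_i = P_i(R)`. -/
def KEIN : ℕ → FOFormula
  | 0 => .all (.not (.parentOf .root (.var 0)))
  | i + 1 => .all (.imp (.parentOf .root (.var 0)) (.not (Pform i)))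

/-! ## Ehrenfeucht games -/

/-- The winning condition for Duplicator: for all pairs `(x_i, y_i)`, `(x_j, y_j)`
in the list of selected/designated pairs, (Main 1) `π(x_j) = x_i ↔ π(y_j) = y_i`,
and (Main 2) `x_i = x_j ↔ y_i = y_j`. -/
def GoodPairs (T₁ T₂ : RTree) (ps : List (T₁.V × T₂.V)) : Prop :=
  ∀ p ∈ ps, ∀ q ∈ ps,
    (T₁.parent p.1 = some q.1 ↔ T₂.parent p.2 = some q.2) ∧
    (p.1 = q.1 ↔ p.2 = q.2)

/-- Duplicator wins the scheduled Ehrenfeucht game on `T₁, T₂` in which Spoiler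
must play his moves in consecutive batches, the batch sizes given by the list
`sched`, switching trees after each batch; `side = true` means Spoiler currently
plays on `T₁` (Duplicator answering on `T₂`), `side = false` means Spoiler
currently plays on `T₂`.  The list `ps` records the pairs selected so far
(including designated pairs and the pair of roots); Duplicator wins when the
final configuration satisfies `GoodPairs`. -/
def DupWinsSched (T₁ T₂ : RTree) : List ℕ → Bool → List (T₁.V × T₂.V) → Prop
  | [], _, ps => GoodPairs T₁ T₂ ps
  | 0 :: rest, side, ps => DupWinsSched T₁ T₂ rest (!side) ps
  | (n + 1) :: rest, side, ps =>
      if side then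
        ∀ x : T₁.V, ∃ y : T₂.V, DupWinsSched T₁ T₂ (n :: rest) side ((x, y) :: ps)
      else
        ∀ y : T₂.V, ∃ x : T₁.V, DupWinsSched T₁ T₂ (n :: rest) side ((x, y) :: ps)
termination_by sched _ _ => (sched.length, sched.sum)
decreasing_by
  all_goals
    first
      | exact Prod.Lex.left _ _ (Nat.lt_succ_self _)
      | exact Prod.Lex.right _ (by simp [List.sum_cons])

/-- The cost (in switches) for Spoiler of playing on side `side` when his
previous move (if any) was on side `last`. -/
def switchCost (last : Option Bool) (side : Bool) : ℕ :=
  match last with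
  | none => 0
  | some b => if b = side then 0 else 1

/-- Duplicator wins the Ehrenfeucht game `EHR` with `rounds` remaining rounds,
`sw` remaining switches allowed to Spoiler, `last` the side on which Spoiler
made his previous move (if any), and `ps` the pairs selected so far.  In each
round Spoiler picks a side (paying a switch if he changes trees, which he may
do only if he has switches left) and a vertex in that tree, and Duplicator
answers in the other tree. -/
def DupWinsEHRAux (T₁ T₂ : RTree) :
    ℕ → ℕ → Option Bool → List (T₁.V × T₂.V) → Prop
  | 0, _, _, ps => GoodPairs T₁ T₂ ps
  | r + 1, sw, last, ps =>
      ∀ side : Bool, switchCost last side ≤ sw →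
        if side then
          ∀ x : T₁.V, ∃ y : T₂.V,
            DupWinsEHRAux T₁ T₂ r (sw - switchCost last side) (some side) ((x, y) :: ps)
        else
          ∀ y : T₂.V, ∃ x : T₁.V,
            DupWinsEHRAux T₁ T₂ r (sw - switchCost last side) (some side) ((x, y) :: ps)

/-- Duplicator wins the game `EHR[T₁, T₂, s, r]`: `r` rounds, Spoiler may start
on either tree and make at most `s` switches. -/
def DupWinsEHR (T₁ T₂ : RTree) (s r : ℕ) : Prop :=
  DupWinsEHRAux T₁ T₂ r s none [(T₁.root, T₂.root)]

/-! ## The trees `T₁^{(s,k,m)}` and `T₂^{(s,k,m)}` -/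

/-- The one-vertex rooted tree. -/
def single : RTree where
  V := PUnit
  root := PUnit.unit
  parent := fun _ => none

/-- Hang the trees `f 0, …, f (n-1)` from a new root: the root of each `f i`
becomes a child of the new root. -/
def hang (n : ℕ) (f : Fin n → RTree) : RTree where
  V := Unit ⊕ (Σ i : Fin n, (f i).V)
  root := Sum.inl ()
  parent := fun x =>
    match x with
    | Sum.inl _ => none
    | Sum.inr ⟨i, w⟩ =>
      match (f i).parent w with
      | none => some (Sum.inl ())
      | some w' => some (Sum.inr ⟨i, w'⟩)

/-- The pair of trees `(T₁^{(s,k,m)}, T₂^{(s,k,m)})`, indexed by `s` (the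
parameter `k` plays no role in the construction).  Conventions for `s = 0`:
`T₁^{(0)}` is a single vertex and `T₂^{(0)}` is a star of `m` childless
children.  For `s ≥ 1`: in `T₁^{(s+1)}` the root has `m+1` children, from each
of which hangs a copy of `T₂^{(s)}`; in `T₂^{(s+1)}` the root has `m+1`
children, from `m` of which hangs a copy of `T₂^{(s)}` and from the remaining
one hangs a copy of `T₁^{(s)}`. -/
def TreePair (m : ℕ) : ℕ → RTree × RTree
  | 0 => (single, hang m fun _ => single)
  | s + 1 =>
      (hang (m + 1) fun _ => (TreePair m s).2,
       hang (m + 1) fun i => if i.1 = m then (TreePair m s).1 else (TreePair m s).2)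

/-- The tree `T₁^{(s,k,m)}`. -/
def Tree1 (s k m : ℕ) : RTree := (TreePair m s).1

/-- The tree `T₂^{(s,k,m)}`. -/
def Tree2 (s k m : ℕ) : RTree := (TreePair m s).2

/-!
Both trees consist of a root with copies of the star `B` (a root with `m` leaves) hanging from
it: `m + 1` copies in `T₁^{(1,k,m)}`, and `m` copies plus one leaf in `T₂^{(1,k,m)}`. Duplicator
answers a move in copy `i` of `T₁` by the same vertex of `B` in copy `σ i` of `T₂`, choosing
`σ i` among the copies not yet used the first time Spoiler enters copy `i`. As Spoiler makes
only `k ≤ m` moves, a fresh copy is always available, `σ` stays injective on the copies visited,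
and hence the parent and equality relations between chosen vertices are the same in both trees.
-/

open Function

theorem Set.InjOn.exists_eqOn_injOn_insert {α β : Type*} [DecidableEq α] [Fintype β]
    [DecidableEq β] {f : α → β} {s : Finset α} (hf : Set.InjOn f s)
    (hs : s.card < Fintype.card β) (a : α) :
    ∃ g : α → β, Set.EqOn g f s ∧ Set.InjOn g (insert a s : Finset α) := by
  by_cases ha : a ∈ s
  · exact ⟨f, Set.eqOn_refl f s, by rwa [Finset.insert_eq_of_mem ha]⟩
  obtain ⟨b, -, hb⟩ : ∃ b ∈ Finset.univ, b ∉ s.image f :=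
    Finset.exists_mem_notMem_of_card_lt_card (Finset.card_image_le.trans_lt hs)
  have heq : Set.EqOn (update f a b) f s := fun x hx =>
    update_of_ne (ne_of_mem_of_not_mem hx ha) b f
  refine ⟨update f a b, heq, ?_⟩
  rw [Finset.coe_insert, Set.injOn_insert (by exact_mod_cast ha), heq.image_eq, update_self]
  exact ⟨hf.congr heq.symm, by simpa using hb⟩

theorem dupWinsSched_of_invariant {T₁ T₂ : RTree} (Inv : ℕ → List (T₁.V × T₂.V) → Prop)
    (h_end : ∀ ps, Inv 0 ps → GoodPairs T₁ T₂ ps)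
    (h_step : ∀ n ps, Inv (n + 1) ps → ∀ x, ∃ y, Inv n ((x, y) :: ps)) :
    ∀ n ps, Inv n ps → DupWinsSched T₁ T₂ [n] true ps := by
  intro n
  induction n with
  | zero =>
    intro ps h
    rw [DupWinsSched, DupWinsSched]
    exact h_end ps h
  | succ n ih =>
    intro ps h
    rw [DupWinsSched, if_pos rfl]
    intro x
    obtain ⟨y, hy⟩ := h_step n ps h x
    exact ⟨y, ih _ hy⟩

structure IsBranchFamily (T B : RTree) {ι : Type*} (ℓ : ι → B.V → T.V) : Prop where
  parent_root : T.parent T.root = none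
  parent_branch : ∀ i w, T.parent (ℓ i w) = some ((B.parent w).elim T.root (ℓ i))
  injective : ∀ i j w v, ℓ i w = ℓ j v → i = j ∧ w = v
  branch_ne_root : ∀ i w, ℓ i w ≠ T.root

namespace IsBranchFamily

variable {T B : RTree} {ι : Type*} {ℓ : ι → B.V → T.V}

theorem branch_eq_branch_iff (hℓ : IsBranchFamily T B ℓ) {i j : ι} {w v : B.V} :
    ℓ i w = ℓ j v ↔ i = j ∧ w = v :=
  ⟨hℓ.injective i j w v, by rintro ⟨rfl, rfl⟩; rfl⟩

theorem parent_branch_eq_root_iff (hℓ : IsBranchFamily T B ℓ) {i : ι} {w : B.V} :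
    T.parent (ℓ i w) = some T.root ↔ B.parent w = none := by
  rw [hℓ.parent_branch]
  cases B.parent w <;> simp [hℓ.branch_ne_root]

theorem parent_branch_eq_branch_iff (hℓ : IsBranchFamily T B ℓ) {i j : ι} {w v : B.V} :
    T.parent (ℓ i w) = some (ℓ j v) ↔ i = j ∧ B.parent w = some v := by
  rw [hℓ.parent_branch]
  cases B.parent w <;> simp [hℓ.branch_eq_branch_iff, (hℓ.branch_ne_root j v).symm, eq_comm]

end IsBranchFamily

section Matching

variable {T₁ T₂ B : RTree} {ι₁ ι₂ : Type*} {ℓ₁ : ι₁ → B.V → T₁.V} {ℓ₂ : ι₂ → B.V → T₂.V}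

def IsMatchedPair (ℓ₁ : ι₁ → B.V → T₁.V) (ℓ₂ : ι₂ → B.V → T₂.V) (σ : ι₁ → ι₂) (U : Set ι₁)
    (p : T₁.V × T₂.V) : Prop :=
  p = (T₁.root, T₂.root) ∨ ∃ i ∈ U, ∃ w, p = (ℓ₁ i w, ℓ₂ (σ i) w)

theorem IsMatchedPair.mono {σ σ' : ι₁ → ι₂} {U U' : Set ι₁} {p : T₁.V × T₂.V}
    (hp : IsMatchedPair ℓ₁ ℓ₂ σ U p) (hσ : Set.EqOn σ' σ U) (hU : U ⊆ U') :
    IsMatchedPair ℓ₁ ℓ₂ σ' U' p := by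
  rcases hp with rfl | ⟨i, hi, w, rfl⟩
  · exact Or.inl rfl
  · exact Or.inr ⟨i, hU hi, w, by rw [hσ hi]⟩

theorem goodPairs_of_isMatchedPair (hℓ₁ : IsBranchFamily T₁ B ℓ₁)
    (hℓ₂ : IsBranchFamily T₂ B ℓ₂) {σ : ι₁ → ι₂} {U : Set ι₁} (hσ : Set.InjOn σ U)
    {ps : List (T₁.V × T₂.V)} (hps : ∀ p ∈ ps, IsMatchedPair ℓ₁ ℓ₂ σ U p) :
    GoodPairs T₁ T₂ ps := by
  intro p hp q hq
  rcases hps p hp with rfl | ⟨i, hi, w, rfl⟩ <;> rcases hps q hq with rfl | ⟨j, hj, v, rfl⟩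
  · simp [hℓ₁.parent_root, hℓ₂.parent_root]
  · simp [hℓ₁.parent_root, hℓ₂.parent_root, (hℓ₁.branch_ne_root _ _).symm,
      (hℓ₂.branch_ne_root _ _).symm]
  · simp [hℓ₁.parent_branch_eq_root_iff, hℓ₂.parent_branch_eq_root_iff, hℓ₁.branch_ne_root,
      hℓ₂.branch_ne_root]
  · simp [hℓ₁.parent_branch_eq_branch_iff, hℓ₂.parent_branch_eq_branch_iff,
      hℓ₁.branch_eq_branch_iff, hℓ₂.branch_eq_branch_iff, hσ.eq_iff hi hj]

theorem dupWinsSched_of_isBranchFamily [DecidableEq ι₁] [Fintype ι₂] [DecidableEq ι₂]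
    (hℓ₁ : IsBranchFamily T₁ B ℓ₁) (hℓ₂ : IsBranchFamily T₂ B ℓ₂)
    (h_cover : ∀ x, x = T₁.root ∨ ∃ i w, x = ℓ₁ i w) {n : ℕ} (hn : n ≤ Fintype.card ι₂) :
    DupWinsSched T₁ T₂ [n] true [(T₁.root, T₂.root)] := by
  -- The invariant below needs some map `ι₁ → ι₂`, which exists only if `ι₂` is nonempty.
  cases n with
  | zero =>
    rw [DupWinsSched, DupWinsSched]
    simp [GoodPairs, hℓ₁.parent_root, hℓ₂.parent_root]
  | succ n => ?_
  obtain ⟨j⟩ : Nonempty ι₂ := Fintype.card_pos_iff.mp (by omega)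
  refine dupWinsSched_of_invariant
    (fun n ps => ∃ (σ : ι₁ → ι₂) (U : Finset ι₁), U.card + n ≤ Fintype.card ι₂ ∧
      Set.InjOn σ U ∧ ∀ p ∈ ps, IsMatchedPair ℓ₁ ℓ₂ σ U p) ?_ ?_ (n + 1) _
    ⟨fun _ => j, ∅, by simpa using hn, by simp, by simp [IsMatchedPair]⟩
  · rintro ps ⟨σ, U, -, hσ, hps⟩
    exact goodPairs_of_isMatchedPair hℓ₁ hℓ₂ hσ hps
  · rintro n ps ⟨σ, U, hcard, hσ, hps⟩ x
    rcases h_cover x with rfl | ⟨i, w, rfl⟩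
    · refine ⟨T₂.root, σ, U, by omega, hσ, ?_⟩
      simp only [List.mem_cons, forall_eq_or_imp]
      exact ⟨Or.inl rfl, hps⟩
    · obtain ⟨σ', hσ'σ, hσ'⟩ := hσ.exists_eqOn_injOn_insert (by omega) i
      refine ⟨ℓ₂ (σ' i) w, σ', insert i U, ?_, hσ', ?_⟩
      · have := Finset.card_insert_le i U
        omega
      simp only [List.mem_cons, forall_eq_or_imp]
      refine ⟨Or.inr ⟨i, by simp, w, rfl⟩, fun p hp => (hps p hp).mono hσ'σ ?_⟩
      simp

end Matching

def hangBranch {n : ℕ} (f : Fin n → RTree) (i : Fin n) {B : RTree} (h : f i = B) (w : B.V) :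
    (hang n f).V :=
  Sum.inr ⟨i, cast (congrArg RTree.V h).symm w⟩

theorem hang_parent_hangBranch {n : ℕ} (f : Fin n → RTree) (i : Fin n) {B : RTree}
    (h : f i = B) (w : B.V) :
    (hang n f).parent (hangBranch f i h w) =
      some ((B.parent w).elim (hang n f).root (hangBranch f i h)) := by
  subst h
  cases hw : (f i).parent w <;> simp [hangBranch, hang, hw] <;> rfl

theorem isBranchFamily_hangBranch {n : ℕ} {f : Fin n → RTree} {B : RTree} {ι : Type*}
    {g : ι → Fin n} (hg : Injective g) (h : ∀ a, f (g a) = B) :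
    IsBranchFamily (hang n f) B fun a => hangBranch f (g a) (h a) where
  parent_root := rfl
  parent_branch a w := hang_parent_hangBranch f (g a) (h a) w
  injective a b w v hab := by
    obtain ⟨hgab, hwv⟩ := Sigma.mk.inj_iff.mp (Sum.inr_injective hab)
    have hab := hg hgab
    subst hab
    exact ⟨rfl, eq_of_heq (((cast_heq _ w).symm.trans hwv).trans (cast_heq _ v))⟩
  branch_ne_root a w := Sum.inr_ne_inl

theorem hang_const_eq_root_or_hangBranch {n : ℕ} {B : RTree} (x : (hang n fun _ => B).V) :
    x = (hang n fun _ => B).root ∨ ∃ i w, x = hangBranch (fun _ => B) i rfl w := by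
  rcases x with ⟨⟩ | ⟨i, w⟩
  · exact Or.inl rfl
  · exact Or.inr ⟨i, w, rfl⟩

theorem dup_wins_base_spoiler_on_T1_general (k m : ℕ) (hm : k ≤ m) :
    DupWinsSched (Tree1 1 k m) (Tree2 1 k m) [k] true
      [((Tree1 1 k m).root, (Tree2 1 k m).root)] := by
  set B := hang m fun _ => single
  have h_castSucc (j : Fin m) : (if (Fin.castSucc j).1 = m then single else B) = B :=
    if_neg j.2.ne
  exact dupWinsSched_of_isBranchFamily
    (isBranchFamily_hangBranch (g := id) injective_id fun _ => rfl)
    (isBranchFamily_hangBranch (Fin.castSucc_injective m) h_castSucc)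
    hang_const_eq_root_or_hangBranch (by simpa using hm)

/-- For every positive `k` and `m ≥ k`, Duplicator wins the
`k`-round Ehrenfeucht game on `T₁^{(1,k,m)}` and `T₂^{(1,k,m)}` in which
Spoiler makes all his moves on `T₁^{(1,k,m)}`. -/
theorem dup_wins_base_spoiler_on_T1 (k m : ℕ) (hk : 0 < k) (hm : k ≤ m) :
    DupWinsSched (Tree1 1 k m) (Tree2 1 k m) [k] true
      [((Tree1 1 k m).root, (Tree2 1 k m).root)] :=
  dup_wins_base_spoiler_on_T1_general k m hm
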